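/- Let G be a finite graph and H, K disjoint nonempty subgraphs of G (disjoint vertex sets and edge sets). Then in the Hall algebra of X^G, 1_H * 1_K = Σ_J 1_J, where J ranges over subgraphs of G containing H ⊔ K such that V(J) = V(H) ∪ V(K) and every edge of J not in H ⊔ K joins a vertex of H to a vertex of K. If H and K are not disjoint, then 1_H * 1_K = 0. -/

import Mathlib

/-! A 2-simplex with faces `d₀ = H`, `d₂ = K`, `d₁ = J` can only be `(J; V(K), V(H))`, so there
is at most one. It exists iff `V(K)` and `V(H)` partition `V(J)` and `J` restricts to `H` on
`V(H)` and to `K` on `V(K)`; for disjoint `H`, `K` the latter says that `H ⊔ K ≤ J` and every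
other edge of `J` joins `V(H)` to `V(K)`. -/

section GraphCore

variable {V : Type}

theorem telescope_iUnion {m : ℕ} (M : Fin (m + 1) → Set V) (hM : Antitone M) :
    (⋃ j : Fin m, (M j.castSucc \ M j.succ)) = M 0 \ M (Fin.last m) := by
  ext x
  simp only [Set.mem_iUnion, Set.mem_diff]
  constructor
  · rintro ⟨j, hj1, hj2⟩
    refine ⟨hM (Fin.zero_le _) hj1, fun hx => hj2 (hM (Fin.le_last _) hx)⟩
  · rintro ⟨h0, hlast⟩
    by_contra hno
    push_neg at hno
    have hall : ∀ j : Fin (m + 1), x ∈ M j := by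
      intro j
      induction j using Fin.induction with
      | zero => exact h0
      | succ j ih => exact (hno j ih)
    exact hlast (hall _)

theorem disjoint_layers {m : ℕ} (M : Fin (m + 1) → Set V) (hM : Antitone M) :
    ∀ i j : Fin m, i ≠ j →
      Disjoint (M i.castSucc \ M i.succ) (M j.castSucc \ M j.succ) := by
  have key : ∀ i j : Fin m, i < j →
      Disjoint (M i.castSucc \ M i.succ) (M j.castSucc \ M j.succ) := by
    intro i j hij
    rw [Set.disjoint_left]
    rintro x ⟨_, hxi⟩ ⟨hxj, _⟩
    have : M j.castSucc ⊆ M i.succ := hM (by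
      rw [Fin.succ_le_castSucc_iff]; exact hij)
    exact hxi (this hxj)
  intro i j hij
  rcases lt_or_gt_of_ne hij with h | h
  · exact key i j h
  · exact (key j i h).symm

/-- An `n`-simplex of the 2-Segal set `X^G` of a graph `G`: a subgraph `H`
together with an ordered partition of its vertices into `n` possibly empty
parts. -/
@[ext]
structure GSimplex {V : Type} (G : SimpleGraph V) (n : ℕ) where
  H : G.Subgraph
  S : Fin n → Set V
  cover : (⋃ i, S i) = H.verts
  disj : ∀ i j : Fin n, i ≠ j → Disjoint (S i) (S j)

namespace GSimplex

variable {G : SimpleGraph V}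

/-- The chain of "remaining" vertex sets of a partitioned subgraph:
`chain σ j` is the union of the parts with index `≥ j`. -/
def chain {n : ℕ} (σ : GSimplex G n) (j : Fin (n + 1)) : Set V :=
  ⋃ k : Fin n, if j ≤ k.castSucc then σ.S k else ∅

theorem chain_antitone {n : ℕ} (σ : GSimplex G n) : Antitone σ.chain := by
  intro j j' hjj'
  refine Set.iUnion_subset fun k => ?_
  by_cases h : j' ≤ k.castSucc
  · simp only [h, if_pos]
    exact Set.subset_iUnion_of_subset k (by simp [hjj'.trans h])
  · simp [h]

theorem chain_zero {n : ℕ} (σ : GSimplex G n) : σ.chain 0 = σ.H.verts := by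
  rw [← σ.cover]
  unfold chain

  ext k
  simp [Fin.zero_le]

theorem chain_last {n : ℕ} (σ : GSimplex G n) : σ.chain (Fin.last n) = ∅ := by
  unfold chain
  ext x
  simp only [Set.mem_iUnion, Set.mem_empty_iff_false, iff_false]
  rintro ⟨k, hk⟩
  rw [if_neg] at hk
  · exact hk
  · exact not_le.mpr (Fin.castSucc_lt_last k)

/-- The action of a simplicial operator `α : [m] → [n]` on `X^G`:
the parts are merged or deleted according to `α`, and the subgraph is replaced
by its restriction (spanned subgraph) to the remaining vertices. -/
def act {m n : ℕ} (α : Fin (m + 1) → Fin (n + 1)) (hα : Monotone α)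
    (σ : GSimplex G n) : GSimplex G m where
  H := σ.H.induce (σ.chain (α 0) \ σ.chain (α (Fin.last m)))
  S j := σ.chain (α j.castSucc) \ σ.chain (α j.succ)
  cover := by
    have := telescope_iUnion (fun j => σ.chain (α j)) (σ.chain_antitone.comp_monotone hα)
    simpa using this
  disj := disjoint_layers (fun j => σ.chain (α j)) (σ.chain_antitone.comp_monotone hα)

/-- The `i`-th face map `X^G_{n+1} → X^G_n`. -/
def face {n : ℕ} (i : Fin (n + 2)) : GSimplex G (n + 1) → GSimplex G n :=
  act i.succAbove (Fin.strictMono_succAbove i).monotone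

/-- The `i`-th degeneracy map `X^G_n → X^G_{n+1}`. -/
def degen {n : ℕ} (i : Fin (n + 1)) : GSimplex G n → GSimplex G (n + 1) :=
  act i.predAbove (Fin.predAbove_right_monotone i)

/-- The element of `X^G_1` corresponding to a subgraph `H` of `G`. -/
def ofSubgraph (H : G.Subgraph) : GSimplex G 1 where
  H := H
  S := fun _ => H.verts
  cover := Set.iUnion_const _
  disj := fun i j hij => absurd (Subsingleton.elim i j) hij

end GSimplex

end GraphCore

theorem Nat.card_eq_ite_of_subsingleton {α : Type*} [Subsingleton α] {p : Prop} [Decidable p]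
    (h : Nonempty α ↔ p) : Nat.card α = if p then 1 else 0 := by
  split_ifs with hp
  · have := h.mpr hp
    exact Nat.card_unique
  · have : IsEmpty α := not_nonempty_iff.mp (mt h.mp hp)
    exact Nat.card_of_isEmpty

theorem Set.iUnion_fin_two {α : Type*} (s : Fin 2 → Set α) : ⋃ i, s i = s 0 ∪ s 1 := by
  ext
  simp [Fin.exists_fin_two]

namespace SimpleGraph.Subgraph

variable {V : Type} {G : SimpleGraph V}

theorem induce_verts_eq_self_iff {H J : G.Subgraph} :
    J.induce H.verts = H ↔ (∀ ⦃a b⦄, H.Adj a b → J.Adj a b) ∧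
      ∀ ⦃a b⦄, a ∈ H.verts → b ∈ H.verts → J.Adj a b → H.Adj a b := by
  constructor
  · intro h
    refine ⟨fun a b hab => ?_, fun a b ha hb hab => h ▸ ⟨ha, hb, hab⟩⟩
    rw [← h] at hab
    exact hab.2.2
  · rintro ⟨hHJ, hJH⟩
    ext a b
    · rfl
    · exact ⟨fun ⟨ha, hb, hab⟩ => hJH ha hb hab, fun hab => ⟨hab.fst_mem, hab.snd_mem, hHJ hab⟩⟩

theorem adj_of_adj_of_crossing {H K J : G.Subgraph} (hHK : Disjoint H.verts K.verts)
    (hcross : ∀ a b : V, J.Adj a b → ¬ H.Adj a b → ¬ K.Adj a b →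
      (a ∈ H.verts ∧ b ∈ K.verts) ∨ (a ∈ K.verts ∧ b ∈ H.verts))
    {a b : V} (ha : a ∈ H.verts) (hb : b ∈ H.verts) (hab : J.Adj a b) : H.Adj a b := by
  by_contra hH
  have haK : a ∉ K.verts := Set.disjoint_left.mp hHK ha
  have hbK : b ∉ K.verts := Set.disjoint_left.mp hHK hb
  by_cases hK : K.Adj a b
  · exact haK hK.fst_mem
  · rcases hcross a b hab hH hK with ⟨-, hb'⟩ | ⟨ha', -⟩
    exacts [hbK hb', haK ha']

theorem induce_eq_and_induce_eq_iff {H K J : G.Subgraph} (hHK : Disjoint H.verts K.verts)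
    (hJ : J.verts = H.verts ∪ K.verts) :
    J.induce H.verts = H ∧ J.induce K.verts = K ↔ H ⊔ K ≤ J ∧
      ∀ a b : V, J.Adj a b → ¬ H.Adj a b → ¬ K.Adj a b →
        (a ∈ H.verts ∧ b ∈ K.verts) ∨ (a ∈ K.verts ∧ b ∈ H.verts) := by
  simp only [induce_verts_eq_self_iff]
  constructor
  · rintro ⟨⟨hHJ, hJH⟩, hKJ, hJK⟩
    refine ⟨sup_le ⟨hJ ▸ Set.subset_union_left, hHJ⟩ ⟨hJ ▸ Set.subset_union_right, hKJ⟩, ?_⟩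
    intro a b hab hH hK
    have ha : a ∈ H.verts ∪ K.verts := hJ ▸ hab.fst_mem
    have hb : b ∈ H.verts ∪ K.verts := hJ ▸ hab.snd_mem
    rcases ha with ha | ha <;> rcases hb with hb | hb
    exacts [absurd (hJH ha hb hab) hH, .inl ⟨ha, hb⟩, .inr ⟨ha, hb⟩, absurd (hJK ha hb hab) hK]
  · rintro ⟨hle, hcross⟩
    have hcross' : ∀ a b : V, J.Adj a b → ¬ K.Adj a b → ¬ H.Adj a b →
        (a ∈ K.verts ∧ b ∈ H.verts) ∨ (a ∈ H.verts ∧ b ∈ K.verts) :=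
      fun a b hab hK hH => (hcross a b hab hH hK).symm
    exact ⟨⟨(le_sup_left.trans hle).2, fun _ _ => adj_of_adj_of_crossing hHK hcross⟩,
      (le_sup_right.trans hle).2, fun _ _ => adj_of_adj_of_crossing hHK.symm hcross'⟩

end SimpleGraph.Subgraph

namespace GSimplex

variable {V : Type} {G : SimpleGraph V}

theorem eq_ofSubgraph (σ : GSimplex G 1) : σ = ofSubgraph σ.H := by
  ext1
  · rfl
  · funext i
    rw [Subsingleton.elim i default]
    exact (iSup_unique σ.S).symm.trans σ.cover

theorem ofSubgraph_injective : Function.Injective (ofSubgraph (G := G)) :=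
  fun _ _ h => congrArg GSimplex.H h

theorem ext_two {c c' : GSimplex G 2} (hH : c.H = c'.H) (h₀ : c.S 0 = c'.S 0)
    (h₁ : c.S 1 = c'.S 1) : c = c' := by
  ext1
  · exact hH
  · funext i
    fin_cases i
    exacts [h₀, h₁]

theorem verts_eq_union (c : GSimplex G 2) : c.H.verts = c.S 0 ∪ c.S 1 := by
  rw [← c.cover, Set.iUnion_fin_two]

theorem chain_one (c : GSimplex G 2) : c.chain 1 = c.S 1 := by
  simp [chain, Set.iUnion_fin_two]

theorem face_zero_eq (c : GSimplex G 2) : face 0 c = ofSubgraph (c.H.induce (c.S 1)) := by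
  rw [eq_ofSubgraph (face 0 c)]
  show ofSubgraph (c.H.induce (c.chain 1 \ c.chain (Fin.last 2))) = _
  rw [chain_one, chain_last, Set.sdiff_empty]

theorem face_one_eq (c : GSimplex G 2) : face 1 c = ofSubgraph c.H := by
  rw [eq_ofSubgraph (face 1 c)]
  show ofSubgraph (c.H.induce (c.chain 0 \ c.chain (Fin.last 2))) = _
  rw [chain_zero, chain_last, Set.sdiff_empty, SimpleGraph.Subgraph.induce_self_verts]

theorem face_two_eq (c : GSimplex G 2) : face 2 c = ofSubgraph (c.H.induce (c.S 0)) := by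
  rw [eq_ofSubgraph (face 2 c)]
  show ofSubgraph (c.H.induce (c.chain 0 \ c.chain 1)) = _
  rw [chain_zero, chain_one, verts_eq_union, Set.union_sdiff_cancel_right]
  exact (c.disj 0 1 (by decide)).inter_eq.le

theorem exists_iff_disjoint {J : G.Subgraph} {A B : Set V} :
    (∃ c : GSimplex G 2, c.H = J ∧ c.S 0 = A ∧ c.S 1 = B) ↔
      Disjoint A B ∧ J.verts = A ∪ B := by
  constructor
  · rintro ⟨c, rfl, rfl, rfl⟩
    exact ⟨c.disj 0 1 (by decide), c.verts_eq_union⟩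
  · rintro ⟨hAB, hJ⟩
    refine ⟨⟨J, ![A, B], by rw [Set.iUnion_fin_two, hJ]; rfl, ?_⟩, rfl, rfl, rfl⟩
    intro i j hij
    fin_cases i <;> fin_cases j
    exacts [absurd rfl hij, hAB, hAB.symm, absurd rfl hij]

theorem S_one_eq_of_face_zero {c : GSimplex G 2} {H : G.Subgraph}
    (h : face 0 c = ofSubgraph H) : c.S 1 = H.verts := by
  rw [face_zero_eq] at h
  exact congrArg SimpleGraph.Subgraph.verts (ofSubgraph_injective h)

theorem S_zero_eq_of_face_two {c : GSimplex G 2} {K : G.Subgraph}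
    (h : face 2 c = ofSubgraph K) : c.S 0 = K.verts := by
  rw [face_two_eq] at h
  exact congrArg SimpleGraph.Subgraph.verts (ofSubgraph_injective h)

theorem H_eq_of_face_one {c : GSimplex G 2} {J : G.Subgraph}
    (h : face 1 c = ofSubgraph J) : c.H = J := by
  rw [face_one_eq] at h
  exact ofSubgraph_injective h

theorem faces_eq_ofSubgraph_iff {H K J : G.Subgraph} (c : GSimplex G 2) :
    (face 0 c = ofSubgraph H ∧ face 2 c = ofSubgraph K ∧ face 1 c = ofSubgraph J) ↔
      (c.H = J ∧ c.S 0 = K.verts ∧ c.S 1 = H.verts) ∧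
        J.induce H.verts = H ∧ J.induce K.verts = K := by
  constructor
  · rintro ⟨h₀, h₂, h₁⟩
    obtain rfl := H_eq_of_face_one h₁
    refine ⟨⟨rfl, S_zero_eq_of_face_two h₂, S_one_eq_of_face_zero h₀⟩, ?_, ?_⟩
    · rw [← S_one_eq_of_face_zero h₀]
      exact ofSubgraph_injective ((face_zero_eq c).symm.trans h₀)
    · rw [← S_zero_eq_of_face_two h₂]
      exact ofSubgraph_injective ((face_two_eq c).symm.trans h₂)
  · rintro ⟨⟨rfl, h₀, h₁⟩, hH, hK⟩
    rw [face_zero_eq, face_two_eq, face_one_eq, h₀, h₁, hH, hK]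
    exact ⟨rfl, rfl, rfl⟩

theorem subsingleton_faces_eq_ofSubgraph (H K J : G.Subgraph) :
    Subsingleton {c : GSimplex G 2 //
      face 0 c = ofSubgraph H ∧ face 2 c = ofSubgraph K ∧ face 1 c = ofSubgraph J} := by
  refine ⟨fun ⟨c, hc⟩ ⟨c', hc'⟩ => Subtype.ext ?_⟩
  obtain ⟨⟨hH, h₀, h₁⟩, -⟩ := (faces_eq_ofSubgraph_iff c).mp hc
  obtain ⟨⟨hH', h₀', h₁'⟩, -⟩ := (faces_eq_ofSubgraph_iff c').mp hc'
  exact ext_two (hH.trans hH'.symm) (h₀.trans h₀'.symm) (h₁.trans h₁'.symm)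

theorem disjoint_of_face_zero_of_face_two {c : GSimplex G 2} {H K : G.Subgraph}
    (h₀ : face 0 c = ofSubgraph H) (h₂ : face 2 c = ofSubgraph K) :
    Disjoint H.verts K.verts := by
  rw [← S_one_eq_of_face_zero h₀, ← S_zero_eq_of_face_two h₂]
  exact c.disj 1 0 (by decide)

theorem exists_faces_eq_ofSubgraph_iff {H K J : G.Subgraph} :
    (∃ c : GSimplex G 2,
        face 0 c = ofSubgraph H ∧ face 2 c = ofSubgraph K ∧ face 1 c = ofSubgraph J) ↔
      (Disjoint K.verts H.verts ∧ J.verts = K.verts ∪ H.verts) ∧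
        J.induce H.verts = H ∧ J.induce K.verts = K := by
  simp only [faces_eq_ofSubgraph_iff, exists_and_right, exists_iff_disjoint]

end GSimplex

open scoped Classical in
/-- Let `G` be a finite graph and `H, K` disjoint nonempty
subgraphs.  Then in the Hall algebra of `X^G` we have `1_H * 1_K = Σ_J 1_J`,
where `J` ranges over subgraphs of `G` containing `H ⊔ K` with
`V(J) = V(H) ∪ V(K)` and with every edge of `J` not in `H ⊔ K` joining a
vertex of `H` to a vertex of `K`.  If `H` and `K` are not disjoint then
`1_H * 1_K = 0`. -/
theorem hall_graph_product {V : Type} [Fintype V] (G : SimpleGraph V) :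
    (∀ H K : G.Subgraph, Disjoint H.verts K.verts →
      H.verts.Nonempty → K.verts.Nonempty →
      ∀ J : G.Subgraph,
        Nat.card {c : GSimplex G 2 //
            GSimplex.face 0 c = GSimplex.ofSubgraph H ∧
            GSimplex.face 2 c = GSimplex.ofSubgraph K ∧
            GSimplex.face 1 c = GSimplex.ofSubgraph J} =
          if H ⊔ K ≤ J ∧ J.verts = H.verts ∪ K.verts ∧
              (∀ a b : V, J.Adj a b → ¬ H.Adj a b → ¬ K.Adj a b →
                (a ∈ H.verts ∧ b ∈ K.verts) ∨ (a ∈ K.verts ∧ b ∈ H.verts))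
            then 1 else 0) ∧
    (∀ H K : G.Subgraph, ¬ Disjoint H.verts K.verts →
      ∀ b'' : GSimplex G 1,
        Nat.card {c : GSimplex G 2 //
            GSimplex.face 0 c = GSimplex.ofSubgraph H ∧
            GSimplex.face 2 c = GSimplex.ofSubgraph K ∧
            GSimplex.face 1 c = b''} = 0) := by
  refine ⟨fun H K hHK _ _ J => ?_, fun H K hHK _ => ?_⟩
  · have := GSimplex.subsingleton_faces_eq_ofSubgraph H K J
    refine Nat.card_eq_ite_of_subsingleton (nonempty_subtype.trans ?_)
    rw [GSimplex.exists_faces_eq_ofSubgraph_iff, disjoint_comm, Set.union_comm, and_assoc,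
      and_iff_right hHK, and_congr_right (SimpleGraph.Subgraph.induce_eq_and_induce_eq_iff hHK)]
    exact and_left_comm
  · rw [Nat.card_eq_zero]
    exact .inl ⟨fun c => hHK (GSimplex.disjoint_of_face_zero_of_face_two c.2.1 c.2.2.1)⟩
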